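/- arXiv:2301.02279 — 4 statements merged into one kernel-verified Lean document; each statement's English description precedes it below -/
import Mathlib

section
/- Let $(a_k)_{k\ge 1}$ be a non-negative sequence and let $0 < s < t < 1$ with $s + t > 1$. Suppose there exist positive constants $c, d$ such that $a_{k+1} \le (1 - c/k^s) a_k + d/k^{t+s}$ for all $k \ge 1$. Then there exist a positive integer $K$ with $K > cK^{1-s} \ge 1$ and nonnegative constants $c_\star, d_\star$ such that for all $k \ge K$, $a_k \le c_\star / k^{t+s-1} + d_\star / k$. -/
/-!
Put `p = t + s - 1`, so that `t + s = p + 1` and `0 < p < 1`. Beyond some `K` we have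
`c < k ^ s` and `c k ^ (1 - s) ≥ 1`; with `C = max (a K * K ^ p) (d / (1 - p))` one shows
`a k ≤ C / k ^ p` for `k ≥ K` by induction, so `d⋆ = 0` suffices. In the induction step the
contraction removes `C c / k ^ (p + s) = C c k ^ (1 - s) / k ^ (p + 1) ≥ (C p + d) / k ^ (p + 1)`,
which pays for the noise `d / k ^ (p + 1)` and for the decrease
`C / k ^ p - C / (k + 1) ^ p ≤ C p / k ^ (p + 1)`, a consequence of Bernoulli's inequality
`(1 + 1 / k) ^ p ≤ 1 + p / k`.
-/

open Real Filter

theorem div_rpow_sub_le_div_add_one_rpow {C x p : ℝ} (hC : 0 ≤ C) (hx : 0 < x)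
    (hp₀ : 0 ≤ p) (hp₁ : p ≤ 1) :
    C / x ^ p - C * p / x ^ (p + 1) ≤ C / (x + 1) ^ p := by
  have hy : 0 < x⁻¹ := inv_pos.2 hx
  have bernoulli : (1 + x⁻¹) ^ p ≤ 1 + p * x⁻¹ :=
    rpow_one_add_le_one_add_mul_self (by linarith) hp₀ hp₁
  have hinv : 1 - p * x⁻¹ ≤ ((1 + x⁻¹) ^ p)⁻¹ := by
    calc 1 - p * x⁻¹ ≤ 1 / (1 + p * x⁻¹) := by
          rw [le_div_iff₀ (by positivity)]
          nlinarith [sq_nonneg (p * x⁻¹)]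
      _ = (1 + p * x⁻¹)⁻¹ := one_div _
      _ ≤ ((1 + x⁻¹) ^ p)⁻¹ := inv_anti₀ (by positivity) bernoulli
  calc C / x ^ p - C * p / x ^ (p + 1) = C / x ^ p * (1 - p * x⁻¹) := by
        rw [rpow_add_one hx.ne']; field_simp
    _ ≤ C / x ^ p * ((1 + x⁻¹) ^ p)⁻¹ := by gcongr
    _ = C / (x + 1) ^ p := by
        rw [← div_eq_mul_inv, div_div, ← mul_rpow hx.le (by positivity), mul_add, mul_one,
          mul_inv_cancel₀ hx.ne']

theorem le_div_add_one_rpow_of_le_div_rpow {u v x s c d C p : ℝ} (hx : 0 < x) (hp₀ : 0 ≤ p)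
    (hp₁ : p ≤ 1) (hC : 0 ≤ C) (hcx : c ≤ x ^ s) (hgain : C * p + d ≤ C * c * x ^ (1 - s))
    (hu : u ≤ C / x ^ p) (hv : v ≤ (1 - c / x ^ s) * u + d / x ^ (p + 1)) :
    v ≤ C / (x + 1) ^ p := by
  have hcontr : 0 ≤ 1 - c / x ^ s := sub_nonneg.2 (div_le_one_of_le₀ hcx (by positivity))
  have hsplit : x ^ (p + 1) = x ^ p * x ^ s * x ^ (1 - s) := by
    rw [← rpow_add hx, ← rpow_add hx]; ring_nf
  calc v ≤ (1 - c / x ^ s) * (C / x ^ p) + d / x ^ (p + 1) := by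
        grw [hv, hu]
    _ = C / x ^ p - (C * c * x ^ (1 - s) - d) / x ^ (p + 1) := by
        rw [hsplit]; field_simp; ring
    _ ≤ C / x ^ p - C * p / x ^ (p + 1) := by gcongr; linarith
    _ ≤ C / (x + 1) ^ p := div_rpow_sub_le_div_add_one_rpow hC hx hp₀ hp₁

theorem eventually_lt_rpow_and_one_le_mul_rpow {c s : ℝ} (hc : 0 < c) (hs₀ : 0 < s) (hs₁ : s < 1) :
    ∀ᶠ k : ℕ in atTop, 0 < (k : ℝ) ∧ c < (k : ℝ) ^ s ∧ 1 ≤ c * (k : ℝ) ^ (1 - s) := by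
  have hk := tendsto_natCast_atTop_atTop (R := ℝ)
  have hpow := (tendsto_rpow_atTop hs₀).comp hk
  have hgrow := ((tendsto_rpow_atTop (sub_pos.2 hs₁)).const_mul_atTop hc).comp hk
  exact (hk.eventually_gt_atTop 0).and
    ((hpow.eventually_gt_atTop c).and (hgrow.eventually_ge_atTop 1))

theorem le_div_rpow_of_recurrence {a : ℕ → ℝ} {s c d C p : ℝ} {K : ℕ} (hp₀ : 0 ≤ p) (hp₁ : p ≤ 1)
    (hC : 0 ≤ C)
    (hK : ∀ k ≥ K, 0 < (k : ℝ) ∧ c ≤ (k : ℝ) ^ s ∧ C * p + d ≤ C * c * (k : ℝ) ^ (1 - s))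
    (hrec : ∀ k ≥ K, a (k + 1) ≤ (1 - c / (k : ℝ) ^ s) * a k + d / (k : ℝ) ^ (p + 1))
    (hbase : a K ≤ C / (K : ℝ) ^ p) :
    ∀ k ≥ K, a k ≤ C / (k : ℝ) ^ p := by
  intro k hk
  induction k, hk using Nat.le_induction with
  | base => exact hbase
  | succ k hk ih =>
    obtain ⟨hk₀, hck, hgain⟩ := hK k hk
    push_cast
    exact le_div_add_one_rpow_of_le_div_rpow hk₀ hp₀ hp₁ hC hck hgain ih (hrec k hk)

theorem stmt1_general (a : ℕ → ℝ) (s t c d : ℝ)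
    (ha : ∀ k, 0 ≤ a k)
    (hs : 0 < s) (hst : s < t) (ht : t < 1) (hsum : 1 < s + t)
    (hc : 0 < c)
    (hrec : ∀ k : ℕ, 1 ≤ k → a (k + 1) ≤ (1 - c / (k : ℝ) ^ s) * a k + d / (k : ℝ) ^ (t + s)) :
    ∃ K : ℕ, (c * (K : ℝ) ^ (1 - s) < K ∧ 1 ≤ c * (K : ℝ) ^ (1 - s)) ∧
      ∃ cstar dstar : ℝ, 0 ≤ cstar ∧ 0 ≤ dstar ∧
        ∀ k : ℕ, K ≤ k → a k ≤ cstar / (k : ℝ) ^ (t + s - 1) + dstar / (k : ℝ) := by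
  set p := t + s - 1
  obtain ⟨K, hK⟩ := eventually_atTop.1
    (eventually_lt_rpow_and_one_le_mul_rpow hc hs (hst.trans ht))
  obtain ⟨hK₀, hcK, hK₁⟩ := hK K le_rfl
  set C := max (a K * (K : ℝ) ^ p) (d / (1 - p))
  have hC : 0 ≤ C := (mul_nonneg (ha K) (by positivity)).trans (le_max_left _ _)
  have hdC : d ≤ C * (1 - p) := (div_le_iff₀ (by linarith)).1 (le_max_right _ _)
  have hbound : ∀ k ≥ K, a k ≤ C / (k : ℝ) ^ p := by
    refine le_div_rpow_of_recurrence (s := s) (c := c) (d := d) (by linarith) (by linarith) hC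
      (fun k hk ↦ ?_) (fun k hk ↦ ?_) ?_
    · obtain ⟨hk₀, hck, hk₁⟩ := hK k hk
      refine ⟨hk₀, hck.le, ?_⟩
      linarith [mul_le_mul_of_nonneg_left hk₁ hC]
    · simpa [p] using hrec k (Nat.cast_pos.1 (hK k hk).1)
    · rw [le_div_iff₀ (by positivity)]
      exact le_max_left _ _
  refine ⟨K, ⟨?_, hK₁⟩, C, 0, hC, le_rfl, fun k hk ↦ by simpa using hbound k hk⟩
  calc c * (K : ℝ) ^ (1 - s) < (K : ℝ) ^ s * (K : ℝ) ^ (1 - s) := by gcongr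
    _ = K := by rw [← rpow_add hK₀, add_sub_cancel, rpow_one]

theorem stmt1 (a : ℕ → ℝ) (s t c d : ℝ)
    (ha : ∀ k, 0 ≤ a k)
    (hs : 0 < s) (hst : s < t) (ht : t < 1) (hsum : 1 < s + t)
    (hc : 0 < c) (hd : 0 < d)
    (hrec : ∀ k : ℕ, 1 ≤ k → a (k + 1) ≤ (1 - c / (k : ℝ) ^ s) * a k + d / (k : ℝ) ^ (t + s)) :
    ∃ K : ℕ, (c * (K : ℝ) ^ (1 - s) < K ∧ 1 ≤ c * (K : ℝ) ^ (1 - s)) ∧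
      ∃ cstar dstar : ℝ, 0 ≤ cstar ∧ 0 ≤ dstar ∧
        ∀ k : ℕ, K ≤ k → a k ≤ cstar / (k : ℝ) ^ (t + s - 1) + dstar / (k : ℝ) :=
  stmt1_general a s t c d ha hs hst ht hsum hc hrec
end

section
/- Let $(a_k)$ be a non-negative sequence, $0 < s < t < 1$, $s+t>1$, and positive constants $c,d$ with $a_{k+1} \le (1 - c/k^s)a_k + d/k^{t+s}$ for all $k\ge 1$. Fix an integer $K$ with $K > cK^{1-s} \ge 1$ and set $\tilde c = \lfloor cK^{1-s}\rfloor$ and $p = t+s-1$. Then for all $k \ge K$, $a_{k+1} - \frac{d}{\tilde c - p}\cdot\frac{1}{(k+1)^p} \le \left(1 - \frac{\tilde c}{k}\right)\left(a_k - \frac{d}{\tilde c - p}\cdot\frac{1}{k^p}\right)$. -/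
/-!
With `C = ⌊c K^{1-s}⌋` and `k ≥ K` we have `C/k ≤ c K^{1-s}/k ≤ c/k^s`, so the recursion gives
`a (k+1) ≤ (1 - C/k) a k + d / k^{p+1}`. The shift `D/k^p` with `D = d/(C - p)` is chosen so
that `d = D (C - p)`, and the claim reduces to the tangent-line bound
`1/k^p - 1/(k+1)^p ≤ p/k^{p+1}` for the convex function `x ↦ x^{-p}`, which is Bernoulli's
inequality `(1 - 1/(k+1))^{p+1} ≥ 1 - (p+1)/(k+1)`.
-/

open Real

theorem one_div_rpow_sub_one_div_add_one_rpow_le {x p : ℝ} (hx : 0 < x) (hp : 0 ≤ p) :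
    1 / x ^ p - 1 / (x + 1) ^ p ≤ p / x ^ (p + 1) := by
  have hy : 0 < x + 1 := by linarith
  have hxp := rpow_pos_of_pos hx p
  have hyp := rpow_pos_of_pos hy p
  have bernoulli := one_add_mul_self_le_rpow_one_add
    (s := -1 / (x + 1)) (by rw [neg_div, neg_le_neg_iff, div_le_one hy]; linarith)
    (p := p + 1) (by linarith)
  have hbase : 1 + -1 / (x + 1) = x / (x + 1) := by field_simp; ring
  rw [hbase, div_rpow hx.le hy.le, rpow_add_one hx.ne', rpow_add_one hy.ne',
    le_div_iff₀ (by positivity)] at bernoulli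
  field_simp at bernoulli
  have key : (x - p) * (x + 1) ^ p * x ^ p ≤ x * x ^ p * x ^ p :=
    mul_le_mul_of_nonneg_right (by linarith) hxp.le
  rw [rpow_add_one hx.ne', div_sub_div _ _ hxp.ne' hyp.ne',
    div_le_div_iff₀ (by positivity) (by positivity)]
  linarith

theorem mul_rpow_one_sub_div_le_div_rpow {c s K x : ℝ} (hc : 0 ≤ c) (hs : s ≤ 1)
    (hK : 0 ≤ K) (hKx : K ≤ x) (hx : 0 < x) :
    c * K ^ (1 - s) / x ≤ c / x ^ s := by
  have hpow : K ^ (1 - s) ≤ x ^ (1 - s) := rpow_le_rpow hK hKx (by linarith)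
  calc c * K ^ (1 - s) / x ≤ c * x ^ (1 - s) / x := by gcongr
    _ = c / x ^ s := by rw [rpow_sub hx, rpow_one]; field_simp

theorem contraction_of_le_one_sub_div_mul_add {a₀ a₁ x C p d : ℝ} (hx : 0 < x) (hp : 0 ≤ p)
    (hpC : p < C) (hd : 0 ≤ d) (h : a₁ ≤ (1 - C / x) * a₀ + d / x ^ (p + 1)) :
    a₁ - d / (C - p) * (1 / (x + 1) ^ p) ≤ (1 - C / x) * (a₀ - d / (C - p) * (1 / x ^ p)) := by
  have hCp : 0 < C - p := by linarith
  have tangent := mul_le_mul_of_nonneg_left (one_div_rpow_sub_one_div_add_one_rpow_le hx hp)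
    (div_nonneg hd hCp.le)
  have balance : d / (C - p) * (p / x ^ (p + 1)) + d / x ^ (p + 1) =
      C / x * (d / (C - p) * (1 / x ^ p)) := by
    rw [rpow_add_one hx.ne']
    field_simp
    ring
  linarith

theorem stmt2_general (a : ℕ → ℝ) (s t c d : ℝ) (K : ℕ)
    (ha : ∀ k, 0 ≤ a k)
    (hst : s < t) (ht : t < 1) (hsum : 1 < s + t)
    (hc : 0 < c) (hd : 0 < d)
    (hrec : ∀ k : ℕ, 1 ≤ k → a (k + 1) ≤ (1 - c / (k : ℝ) ^ s) * a k + d / (k : ℝ) ^ (t + s))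
    (hK1 : c * (K : ℝ) ^ (1 - s) < K) (hK2 : 1 ≤ c * (K : ℝ) ^ (1 - s)) :
    ∀ k : ℕ, K ≤ k →
      a (k + 1) - d / ((⌊c * (K : ℝ) ^ (1 - s)⌋ : ℝ) - (t + s - 1)) * (1 / ((k : ℝ) + 1) ^ (t + s - 1)) ≤
        (1 - (⌊c * (K : ℝ) ^ (1 - s)⌋ : ℝ) / (k : ℝ)) *
          (a k - d / ((⌊c * (K : ℝ) ^ (1 - s)⌋ : ℝ) - (t + s - 1)) * (1 / (k : ℝ) ^ (t + s - 1))) := by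
  intro k hk
  have hC1 : (1 : ℝ) ≤ ⌊c * (K : ℝ) ^ (1 - s)⌋ := by
    exact_mod_cast Int.le_floor.mpr (by exact_mod_cast hK2)
  have hCle : (⌊c * (K : ℝ) ^ (1 - s)⌋ : ℝ) ≤ c * (K : ℝ) ^ (1 - s) := Int.floor_le _
  set C : ℝ := (⌊c * (K : ℝ) ^ (1 - s)⌋ : ℝ)
  have hKk : (K : ℝ) ≤ k := by exact_mod_cast hk
  have hk0 : (0 : ℝ) < k := by linarith
  have hcoef : C / k ≤ c / (k : ℝ) ^ s :=
    (div_le_div_of_nonneg_right hCle hk0.le).trans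
      (mul_rpow_one_sub_div_le_div_rpow hc.le (by linarith) K.cast_nonneg hKk hk0)
  have hstep : a (k + 1) ≤ (1 - C / k) * a k + d / (k : ℝ) ^ (t + s - 1 + 1) := by
    have hdamp := mul_le_mul_of_nonneg_right (sub_le_sub_left hcoef 1) (ha k)
    rw [sub_add_cancel]
    linarith [hrec k (by exact_mod_cast hk0)]
  exact contraction_of_le_one_sub_div_mul_add hk0 (by linarith) (by linarith) hd.le hstep

theorem stmt2 (a : ℕ → ℝ) (s t c d : ℝ) (K : ℕ)
    (ha : ∀ k, 0 ≤ a k)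
    (hs : 0 < s) (hst : s < t) (ht : t < 1) (hsum : 1 < s + t)
    (hc : 0 < c) (hd : 0 < d)
    (hrec : ∀ k : ℕ, 1 ≤ k → a (k + 1) ≤ (1 - c / (k : ℝ) ^ s) * a k + d / (k : ℝ) ^ (t + s))
    (hK1 : c * (K : ℝ) ^ (1 - s) < K) (hK2 : 1 ≤ c * (K : ℝ) ^ (1 - s)) :
    ∀ k : ℕ, K ≤ k →
      a (k + 1) - d / ((⌊c * (K : ℝ) ^ (1 - s)⌋ : ℝ) - (t + s - 1)) * (1 / ((k : ℝ) + 1) ^ (t + s - 1)) ≤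
        (1 - (⌊c * (K : ℝ) ^ (1 - s)⌋ : ℝ) / (k : ℝ)) *
          (a k - d / ((⌊c * (K : ℝ) ^ (1 - s)⌋ : ℝ) - (t + s - 1)) * (1 / (k : ℝ) ^ (t + s - 1))) :=
  stmt2_general a s t c d K ha hst ht hsum hc hd hrec hK1 hK2
end

section
/- Let $\mathcal{X} \subseteq \mathbb{R}^n$ be nonempty, convex, and compact, and let $F : \mathcal{X} \to \mathbb{R}^n$ be continuous and pseudo-monotone plus, i.e., (a) for all $x, y \in \mathcal{X}$, $\langle F(y), x - y\rangle \ge 0$ implies $\langle F(x), x - y\rangle \ge 0$, and (b) for all $x, y \in \mathcal{X}$, $\langle F(y), x - y\rangle \ge 0$ and $\langle F(x), x - y\rangle = 0$ together imply $F(x) = F(y)$. Suppose $x_* \in \mathcal{X}$ satisfies $\langle F(x_*), x - x_*\rangle \ge 0$ for all $x \in \mathcal{X}$ (i.e., $x_*$ is a critical point), and suppose $x^\dagger \in \mathcal{X}$ satisfies $\langle F(x^\dagger), x^\dagger - x_*\rangle = 0$. Then $x^\dagger$ is also a critical point: $\langle F(x^\dagger), x - x^\dagger\rangle \ge 0$ for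 all $x \in \mathcal{X}$. -/
open scoped RealInnerProductSpace

section StampacchiaVI

variable {E : Type*} [NormedAddCommGroup E] [InnerProductSpace ℝ E]

def IsStampacchiaSolution (X : Set E) (F : E → E) (x : E) : Prop :=
  ∀ y ∈ X, 0 ≤ ⟪F x, y - x⟫

theorem IsStampacchiaSolution.of_apply_eq_of_inner_eq_zero {X : Set E} {F : E → E} {x z : E}
    (hx : IsStampacchiaSolution X F x) (hFz : F z = F x) (horth : ⟪F z, z - x⟫ = 0) :
    IsStampacchiaSolution X F z := by
  intro y hy
  have hsplit : ⟪F x, y - z⟫ = ⟪F x, y - x⟫ - ⟪F x, z - x⟫ := by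
    rw [← inner_sub_right, sub_sub_sub_cancel_right]
  rw [hFz] at horth ⊢
  rw [hsplit, horth, sub_zero]
  exact hx y hy

end StampacchiaVI

theorem stmt4_general {n : ℕ} (X : Set (EuclideanSpace ℝ (Fin n)))
    (F : EuclideanSpace ℝ (Fin n) → EuclideanSpace ℝ (Fin n))
    (hplus : ∀ x ∈ X, ∀ y ∈ X, 0 ≤ ⟪F y, x - y⟫ → ⟪F x, x - y⟫ = 0 → F x = F y)
    (xstar : EuclideanSpace ℝ (Fin n)) (hxstar : xstar ∈ X)
    (hcrit : ∀ x ∈ X, 0 ≤ ⟪F xstar, x - xstar⟫)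
    (xdag : EuclideanSpace ℝ (Fin n)) (hxdag : xdag ∈ X)
    (horth : ⟪F xdag, xdag - xstar⟫ = 0) :
    ∀ x ∈ X, 0 ≤ ⟪F xdag, x - xdag⟫ := by
  have hFeq : F xdag = F xstar := hplus xdag hxdag xstar hxstar (hcrit xdag hxdag) horth
  exact IsStampacchiaSolution.of_apply_eq_of_inner_eq_zero hcrit hFeq horth

theorem stmt4 {n : ℕ} (X : Set (EuclideanSpace ℝ (Fin n)))
    (F : EuclideanSpace ℝ (Fin n) → EuclideanSpace ℝ (Fin n))
    (hne : X.Nonempty) (hconv : Convex ℝ X) (hcomp : IsCompact X)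
    (hcont : ContinuousOn F X)
    (hpm : ∀ x ∈ X, ∀ y ∈ X, 0 ≤ ⟪F y, x - y⟫ → 0 ≤ ⟪F x, x - y⟫)
    (hplus : ∀ x ∈ X, ∀ y ∈ X, 0 ≤ ⟪F y, x - y⟫ → ⟪F x, x - y⟫ = 0 → F x = F y)
    (xstar : EuclideanSpace ℝ (Fin n)) (hxstar : xstar ∈ X)
    (hcrit : ∀ x ∈ X, 0 ≤ ⟪F xstar, x - xstar⟫)
    (xdag : EuclideanSpace ℝ (Fin n)) (hxdag : xdag ∈ X)
    (horth : ⟪F xdag, xdag - xstar⟫ = 0) :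
    ∀ x ∈ X, 0 ≤ ⟪F xdag, x - xdag⟫ :=
  stmt4_general X F hplus xstar hxstar hcrit xdag hxdag horth
end

section
/- Let $\mathcal{S}_2 \subseteq \mathcal{S}_1 \subseteq \mathbb{R}^n$ be closed convex sets, $\psi$ a differentiable $\tilde\mu$-strongly convex function on a convex set containing $\mathcal{S}_1$, with Bregman divergence $D$. For $x$ in the domain and $y_1, y_2 \in \mathbb{R}^n$, define $x_1^+ = \arg\min_{x'\in\mathcal{S}_1}\{\langle y_1, x - x'\rangle + D(x', x)\}$ and $x_2^+ = \arg\min_{x'\in\mathcal{S}_2}\{\langle y_2, x - x'\rangle + D(x', x)\}$. Then for any $p \in \mathcal{S}_2$: $D(p, x_2^+) \le D(p, x) + \langle y_2, x_1^+ - p\rangle + \frac{1}{2\tilde\mu}\|y_2 - y_1\|_*^2 - \frac{\tilde\mu}{2}\|x_1^+ - x\|^2$. -/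
/-!
Write `D` for the Bregman divergence of `ψ`. The three-point identity
`D(p, x₂⁺) = D(p, x) - D(x₂⁺, x) + ⟪∇ψ x - ∇ψ x₂⁺, p - x₂⁺⟫`, applied once at `p` and once at
`x₂⁺` (with `x₁⁺` as base point), together with the first-order optimality of `x₂⁺` tested
against `p` and of `x₁⁺` tested against `x₂⁺ ∈ S₂ ⊆ S₁`, gives
`D(p, x₂⁺) ≤ D(p, x) + ⟪y₂, x₁⁺ - p⟫ + ⟪y₂ - y₁, x₂⁺ - x₁⁺⟫ - D(x₂⁺, x₁⁺) - D(x₁⁺, x)`.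
Strong convexity bounds both divergences below by `μ/2 ‖·‖²`, and Young's inequality absorbs the
cross term into `‖y₂ - y₁‖² / (2μ) + D(x₂⁺, x₁⁺)`.
-/

open scoped RealInnerProductSpace

section FirstOrder

variable {E : Type*} [NormedAddCommGroup E] [NormedSpace ℝ E] {s : Set E} {f : E → ℝ}
  {f' : E →L[ℝ] ℝ} {a b : E}

theorem IsMinOn.hasFDerivAt_apply_sub_nonneg (h : IsMinOn f s a) (hs : Convex ℝ s)
    (ha : a ∈ s) (hb : b ∈ s) (hf : HasFDerivAt f f' a) : 0 ≤ f' (b - a) :=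
  h.localize.hasFDerivWithinAt_nonneg hf.hasFDerivWithinAt
    (sub_mem_posTangentConeAt_of_segment_subset (hs.segment_subset ha hb))

theorem ConvexOn.hasFDerivAt_apply_sub_le (hf : ConvexOn ℝ s f) (ha : a ∈ s) (hb : b ∈ s)
    (hf' : HasFDerivAt f f' b) : f' (a - b) ≤ f a - f b := by
  let ℓ := AffineMap.lineMap (k := ℝ) b a
  have hℓ : HasDerivAt (f ∘ ℓ) (f' (a - b)) 0 := by
    refine HasFDerivAt.comp_hasDerivAt (0 : ℝ) ?_ AffineMap.hasDerivAt_lineMap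
    simpa [ℓ] using hf'
  have h0 : (0 : ℝ) ∈ ℓ ⁻¹' s := by simpa [ℓ] using hb
  have h1 : (1 : ℝ) ∈ ℓ ⁻¹' s := by simpa [ℓ] using ha
  simpa [ℓ, slope] using (hf.comp_affineMap ℓ).le_slope_of_hasDerivAt h0 h1 one_pos hℓ

end FirstOrder

theorem real_inner_le_inv_mul_norm_sq_add_mul_norm_sq {E : Type*} [NormedAddCommGroup E]
    [InnerProductSpace ℝ E] {μ : ℝ} (hμ : 0 < μ) (u v : E) :
    ⟪u, v⟫ ≤ 1 / (2 * μ) * ‖u‖ ^ 2 + μ / 2 * ‖v‖ ^ 2 := by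
  calc ⟪u, v⟫ ≤ ‖u‖ * ‖v‖ := real_inner_le_norm u v
    _ ≤ 1 / (2 * μ) * ‖u‖ ^ 2 + μ / 2 * ‖v‖ ^ 2 := by
      rw [← sub_nonneg]
      have : 1 / (2 * μ) * ‖u‖ ^ 2 + μ / 2 * ‖v‖ ^ 2 - ‖u‖ * ‖v‖
          = (‖u‖ - μ * ‖v‖) ^ 2 / (2 * μ) := by
        field_simp; ring
      rw [this]; positivity

section Bregman

variable {E : Type*} [NormedAddCommGroup E] [InnerProductSpace ℝ E] [CompleteSpace E]

noncomputable def bregmanDiv (ψ : E → ℝ) (p z : E) : ℝ :=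
  ψ p - ψ z - ⟪gradient ψ z, p - z⟫

theorem bregmanDiv_three_point (ψ : E → ℝ) (p x z : E) :
    bregmanDiv ψ p z =
      bregmanDiv ψ p x - bregmanDiv ψ z x + ⟪gradient ψ x - gradient ψ z, p - z⟫ := by
  simp only [bregmanDiv, inner_sub_left, inner_sub_right]
  ring

variable {ψ : E → ℝ}

theorem StrongConvexOn.mul_norm_sub_sq_le_bregmanDiv {C : Set E} {μ : ℝ}
    (hψ : StrongConvexOn C μ ψ) {a b : E} (ha : a ∈ C) (hb : b ∈ C)
    (hd : DifferentiableAt ℝ ψ b) : μ / 2 * ‖a - b‖ ^ 2 ≤ bregmanDiv ψ a b := by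
  have hconv := strongConvexOn_iff_convex.1 hψ
  have hderiv := hd.hasGradientAt.hasFDerivAt.sub ((hasFDerivAt_id b).norm_sq.const_mul (μ / 2))
  have key := hconv.hasFDerivAt_apply_sub_le ha hb hderiv
  simp only [sub_apply, InnerProductSpace.toDual_apply_apply, smul_apply,
    ContinuousLinearMap.comp_apply, innerSL_apply_apply, id_eq, ContinuousLinearMap.id_apply,
    smul_eq_mul, nsmul_eq_mul, Nat.cast_ofNat, inner_sub_right, real_inner_self_eq_norm_sq] at key
  rw [bregmanDiv, norm_sub_sq_real, real_inner_comm, inner_sub_right]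
  linarith

theorem bregmanDiv_prox_optimality {S : Set E} (hS : Convex ℝ S) {x y z : E} (hz : z ∈ S)
    (hmin : ∀ x' ∈ S, ⟪y, x - z⟫ + bregmanDiv ψ z x ≤ ⟪y, x - x'⟫ + bregmanDiv ψ x' x)
    (hd : DifferentiableAt ℝ ψ z) {w : E} (hw : w ∈ S) :
    ⟪y, w - z⟫ ≤ ⟪gradient ψ z - gradient ψ x, w - z⟫ := by
  have hmin_shifted : IsMinOn (fun x' => ψ x' - ⟪y + gradient ψ x, x'⟫) S z := by
    intro x' hx'
    have := hmin x' hx'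
    simp only [Set.mem_ofPred_eq, bregmanDiv, inner_sub_right, inner_add_left] at this ⊢
    linarith
  have key := hmin_shifted.hasFDerivAt_apply_sub_nonneg hS hz hw
    (hd.hasGradientAt.hasFDerivAt.sub (innerSL ℝ (y + gradient ψ x)).hasFDerivAt)
  simp only [sub_apply, InnerProductSpace.toDual_apply_apply, innerSL_apply_apply,
    inner_add_left] at key
  rw [inner_sub_left]
  linarith

end Bregman

theorem stmt11_general {n : ℕ} (S₁ S₂ C : Set (EuclideanSpace ℝ (Fin n)))
    (ψ : EuclideanSpace ℝ (Fin n) → ℝ) (μ : ℝ) (hμ : 0 < μ)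
    (hS21 : S₂ ⊆ S₁) (hS1C : S₁ ⊆ C)
    (hS₁conv : Convex ℝ S₁)
    (hS₂conv : Convex ℝ S₂)
    (hdiff : ∀ z ∈ C, DifferentiableAt ℝ ψ z)
    (hsc : StrongConvexOn C μ ψ)
    (Dv : EuclideanSpace ℝ (Fin n) → EuclideanSpace ℝ (Fin n) → ℝ)
    (hDv : ∀ p z, Dv p z = ψ p - ψ z - ⟪gradient ψ z, p - z⟫)
    (x y₁ y₂ x₁p x₂p : EuclideanSpace ℝ (Fin n)) (hx : x ∈ C)
    (hx₁p : x₁p ∈ S₁)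
    (hmin₁ : ∀ x' ∈ S₁, ⟪y₁, x - x₁p⟫ + Dv x₁p x ≤ ⟪y₁, x - x'⟫ + Dv x' x)
    (hx₂p : x₂p ∈ S₂)
    (hmin₂ : ∀ x' ∈ S₂, ⟪y₂, x - x₂p⟫ + Dv x₂p x ≤ ⟪y₂, x - x'⟫ + Dv x' x) :
    ∀ p ∈ S₂,
      Dv p x₂p ≤ Dv p x + ⟪y₂, x₁p - p⟫ + 1 / (2 * μ) * ‖y₂ - y₁‖ ^ 2
        - μ / 2 * ‖x₁p - x‖ ^ 2 := by
  intro p hp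
  obtain rfl : Dv = bregmanDiv ψ := funext₂ hDv
  have hx₂p₁ : x₂p ∈ S₁ := hS21 hx₂p
  have opt₂ := bregmanDiv_prox_optimality hS₂conv hx₂p hmin₂ (hdiff _ (hS1C hx₂p₁)) hp
  have opt₁ := bregmanDiv_prox_optimality hS₁conv hx₁p hmin₁ (hdiff _ (hS1C hx₁p)) hx₂p₁
  have three_point₂ := bregmanDiv_three_point ψ p x x₂p
  have three_point₁ := bregmanDiv_three_point ψ x₂p x x₁p
  have sc₂₁ := hsc.mul_norm_sub_sq_le_bregmanDiv (hS1C hx₂p₁) (hS1C hx₁p) (hdiff _ (hS1C hx₁p))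
  have sc₁ := hsc.mul_norm_sub_sq_le_bregmanDiv (hS1C hx₁p) hx (hdiff _ hx)
  have young := real_inner_le_inv_mul_norm_sq_add_mul_norm_sq hμ (y₂ - y₁) (x₂p - x₁p)
  simp only [inner_sub_left, inner_sub_right] at opt₂ opt₁ three_point₂ three_point₁ young ⊢
  linarith

theorem stmt11 {n : ℕ} (S₁ S₂ C : Set (EuclideanSpace ℝ (Fin n)))
    (ψ : EuclideanSpace ℝ (Fin n) → ℝ) (μ : ℝ) (hμ : 0 < μ)
    (hS21 : S₂ ⊆ S₁) (hS1C : S₁ ⊆ C)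
    (hS₁closed : IsClosed S₁) (hS₁conv : Convex ℝ S₁)
    (hS₂closed : IsClosed S₂) (hS₂conv : Convex ℝ S₂)
    (hCconv : Convex ℝ C)
    (hdiff : ∀ z ∈ C, DifferentiableAt ℝ ψ z)
    (hsc : StrongConvexOn C μ ψ)
    (Dv : EuclideanSpace ℝ (Fin n) → EuclideanSpace ℝ (Fin n) → ℝ)
    (hDv : ∀ p z, Dv p z = ψ p - ψ z - ⟪gradient ψ z, p - z⟫)
    (x y₁ y₂ x₁p x₂p : EuclideanSpace ℝ (Fin n)) (hx : x ∈ C)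
    (hx₁p : x₁p ∈ S₁)
    (hmin₁ : ∀ x' ∈ S₁, ⟪y₁, x - x₁p⟫ + Dv x₁p x ≤ ⟪y₁, x - x'⟫ + Dv x' x)
    (hx₂p : x₂p ∈ S₂)
    (hmin₂ : ∀ x' ∈ S₂, ⟪y₂, x - x₂p⟫ + Dv x₂p x ≤ ⟪y₂, x - x'⟫ + Dv x' x) :
    ∀ p ∈ S₂,
      Dv p x₂p ≤ Dv p x + ⟪y₂, x₁p - p⟫ + 1 / (2 * μ) * ‖y₂ - y₁‖ ^ 2
        - μ / 2 * ‖x₁p - x‖ ^ 2 :=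
  stmt11_general S₁ S₂ C ψ μ hμ hS21 hS1C hS₁conv hS₂conv hdiff hsc Dv hDv x y₁ y₂ x₁p x₂p hx hx₁p
    hmin₁ hx₂p hmin₂
end
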